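/- Let G be a graph with a fixed orientation of its edges, let f : V(G) → L be continuous, and let W₁, W₂ be walks in G. If W₁ and W₂ are (f,k)-almost homotopic, then |∫_{W₁} df − ∫_{W₂} df| ≤ k. In particular, if W₁ and W₂ are f-homotopic (i.e., (f,0)-almost homotopic), then ∫_{W₁} df = ∫_{W₂} df. -/

import Mathlib

/-- A graph together with a fixed orientation of its edges: each edge `e` has a
tail `e⁻` and a head `e⁺`. -/
structure OGraph : Type 1 where
  V : Type
  E : Type
  tail : E → V
  head : E → V

/-- The set of labels `L = {−1, 0, 1, ⋆}`. -/
inductive L : Type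
  | neg | zero | pos | star
deriving DecidableEq

/-- The integer value of a label (with junk value `0` at `⋆`). -/
def L.toInt : L → ℤ
  | .neg => -1
  | .zero => 0
  | .pos => 1
  | .star => 0

/-- Two vertices are adjacent if some edge has them as its two endpoints. -/
def OGraph.Adj (G : OGraph) (u v : G.V) : Prop :=
  ∃ e : G.E, (G.tail e = u ∧ G.head e = v) ∨ (G.tail e = v ∧ G.head e = u)

/-- `f` is continuous on `S`: no edge of `G` between vertices of `S` joins the
values `−1` and `1`. -/
def OContinuousOn (G : OGraph) (f : G.V → L) (S : Set G.V) : Prop :=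
  ∀ u v : G.V, u ∈ S → v ∈ S → G.Adj u v → ¬(f u = L.neg ∧ f v = L.pos)

/-- `f` is holomorphic on `S`: it is continuous on `S` and moreover no edge of `G`
between vertices of `S` joins the values `0` and `⋆`. -/
def OHolomorphicOn (G : OGraph) (f : G.V → L) (S : Set G.V) : Prop :=
  OContinuousOn G f S ∧
  ∀ u v : G.V, u ∈ S → v ∈ S → G.Adj u v → ¬(f u = L.zero ∧ f v = L.star)

/-- `f` is entire on `S`: it is continuous on `S` and takes no value `⋆` on `S`. -/
def OEntireOn (G : OGraph) (f : G.V → L) (S : Set G.V) : Prop :=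
  OContinuousOn G f S ∧ ∀ v ∈ S, f v ≠ L.star

/-- The derivative `df : E(G) → ℤ`: `df(e) = f(e⁺) − f(e⁻)` if neither endpoint has value
`⋆`, and `df(e) = 0` otherwise. -/
def dF (G : OGraph) (f : G.V → L) (e : G.E) : ℤ :=
  if f (G.tail e) = L.star ∨ f (G.head e) = L.star then 0
  else (f (G.head e)).toInt - (f (G.tail e)).toInt

/-- A walk in `G` from `u` to `v`, not necessarily respecting the orientation:
at each step some edge joins the current vertex to the next one. -/
inductive OWalk (G : OGraph) : G.V → G.V → Type
  | nil (v : G.V) : OWalk G v v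
  | cons {u w x : G.V} (e : G.E)
      (he : (G.tail e = u ∧ G.head e = w) ∨ (G.head e = u ∧ G.tail e = w))
      (W : OWalk G w x) : OWalk G u x

namespace OWalk

variable {G : OGraph}

/-- The length (number of edges) of a walk. -/
def length : ∀ {u v : G.V}, OWalk G u v → ℕ
  | _, _, nil _ => 0
  | _, _, cons _ _ W => W.length + 1

/-- The list of vertices `v₀, v₁, …, v_n` of a walk. -/
def verts : ∀ {u v : G.V}, OWalk G u v → List G.V
  | u, _, nil _ => [u]
  | u, _, cons _ _ W => u :: W.verts

open scoped Classical in
/-- `I_W = Σ_i ε_i`, where `ε_i(e_i) = +1` if `v_i = e_i⁺`, `ε_i(e_i) = −1` if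
`v_i = e_i⁻`, and `ε_i(e) = 0` for `e ≠ e_i`. -/
noncomputable def wI : ∀ {u v : G.V}, OWalk G u v → G.E → ℤ
  | _, _, nil _ => fun _ => 0
  | _, _, @cons _ _ w _ e _ W => fun e' =>
      (if e' = e then (if G.head e = w then 1 else -1) else 0) + W.wI e'

/-- Concatenation `W₁W₂` of walks. -/
def append : ∀ {u v x : G.V}, OWalk G u v → OWalk G v x → OWalk G u x
  | _, _, _, nil _, W2 => W2
  | _, _, _, cons e he W, W2 => cons e he (W.append W2)

/-- Extension of a walk by one edge at its end. -/
def concat : ∀ {u v w : G.V}, OWalk G u v → (e : G.E) →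
    ((G.tail e = v ∧ G.head e = w) ∨ (G.head e = v ∧ G.tail e = w)) → OWalk G u w
  | _, _, _, nil _, e, he => cons e he (nil _)
  | _, _, _, cons e' he' W, e, he => cons e' he' (W.concat e he)

/-- The reversal `W⁻¹` of a walk. -/
def reverse : ∀ {u v : G.V}, OWalk G u v → OWalk G v u
  | _, _, nil v => nil v
  | _, _, cons e he W => W.reverse.concat e (by tauto)

/-- `∫_W h = Σ_{e ∈ E(G)} I_W(e) · h(e)`. -/
noncomputable def intW [Fintype G.E] {u v : G.V} (W : OWalk G u v) (h : G.E → ℤ) : ℤ :=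
  ∑ e : G.E, W.wI e * h e

/-- A closed walk `W` is `(f,k)`-almost contractible: there are triangles `T₁, …, T_m`
with `I_W = Σ_i I_{T_i}` such that `T_{k+1}, …, T_m` are `f`-contractible (a triangle is
`f`-contractible when `f` is holomorphic on its vertices). -/
def AlmostContractible (f : G.V → L) (k : ℕ) {a : G.V} (W : OWalk G a a) : Prop :=
  ∃ (m : ℕ) (c : Fin m → G.V) (T : ∀ i : Fin m, OWalk G (c i) (c i)),
    (∀ i, (T i).length = 3) ∧
    (∀ i : Fin m, k ≤ i.val → OHolomorphicOn G f {x | x ∈ (T i).verts}) ∧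
    ∀ e : G.E, W.wI e = ∑ i : Fin m, (T i).wI e

/-- Walks `W₁` (from `u₁` to `v₁`) and `W₂` (from `u₂` to `v₂`) are `(f,k)`-almost
homotopic: there are walks `Q : u₁ → u₂` and `R : v₁ → v₂` such that the closed walk
`Q W₂ R⁻¹ W₁⁻¹` is `(f,k)`-almost contractible and `f` is constant with an integer value
(i.e. a value different from `⋆`) on each of `V(Q)` and `V(R)`. -/
def AlmostHomotopic (f : G.V → L) (k : ℕ) {u₁ v₁ u₂ v₂ : G.V}
    (W₁ : OWalk G u₁ v₁) (W₂ : OWalk G u₂ v₂) : Prop :=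
  ∃ (Q : OWalk G u₁ u₂) (R : OWalk G v₁ v₂),
    AlmostContractible f k ((Q.append W₂).append (R.reverse.append W₁.reverse)) ∧
    (∃ c : L, c ≠ L.star ∧ ∀ x ∈ Q.verts, f x = c) ∧
    (∃ c : L, c ≠ L.star ∧ ∀ x ∈ R.verts, f x = c)

end OWalk


namespace L

def step (a b : L) : ℤ :=
  if a = star ∨ b = star then 0 else b.toInt - a.toInt

lemma step_self (a : L) : step a a = 0 := by
  cases a <;> rfl

lemma step_swap (a b : L) : step b a = -step a b := by
  cases a <;> cases b <;> rfl

abbrev ContinuousPair (a b : L) : Prop :=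
  ¬(a = neg ∧ b = pos) ∧ ¬(b = neg ∧ a = pos)

abbrev HolomorphicPair (a b : L) : Prop :=
  ContinuousPair a b ∧ ¬(a = zero ∧ b = star) ∧ ¬(b = zero ∧ a = star)

lemma abs_step_triangle_le_one {a b c : L} :
    ContinuousPair a b → ContinuousPair b c → ContinuousPair c a →
      |step a b + step b c + step c a| ≤ 1 := by
  cases a <;> cases b <;> cases c <;> decide

lemma step_triangle_eq_zero {a b c : L} :
    HolomorphicPair a b → HolomorphicPair b c → HolomorphicPair c a →
      step a b + step b c + step c a = 0 := by
  cases a <;> cases b <;> cases c <;> decide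

end L

section

variable {G : OGraph} {f : G.V → L} {S : Set G.V} {u v : G.V}

lemma OGraph.Adj.symm (h : G.Adj u v) : G.Adj v u :=
  let ⟨e, he⟩ := h; ⟨e, he.symm⟩

lemma OContinuousOn.continuousPair (hf : OContinuousOn G f S) (hu : u ∈ S) (hv : v ∈ S)
    (huv : G.Adj u v) : (f u).ContinuousPair (f v) :=
  ⟨hf u v hu hv huv, hf v u hv hu huv.symm⟩

lemma OHolomorphicOn.holomorphicPair (hf : OHolomorphicOn G f S) (hu : u ∈ S) (hv : v ∈ S)
    (huv : G.Adj u v) : (f u).HolomorphicPair (f v) :=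
  ⟨hf.1.continuousPair hu hv huv, hf.2 u v hu hv huv, hf.2 v u hv hu huv.symm⟩

lemma dF_eq_step (e : G.E) : dF G f e = (f (G.tail e)).step (f (G.head e)) := rfl

end

namespace OWalk

variable {G : OGraph}

lemma start_mem_verts {u v : G.V} (W : OWalk G u v) : u ∈ W.verts := by
  cases W <;> simp [verts]

variable [Fintype G.E]

section General

variable (h : G.E → ℤ)

@[simp]
lemma intW_nil (v : G.V) : (nil (G := G) v).intW h = 0 := by
  simp [intW, wI]

open scoped Classical in
lemma intW_cons {u w x : G.V} (e : G.E)
    (he : (G.tail e = u ∧ G.head e = w) ∨ (G.head e = u ∧ G.tail e = w)) (W : OWalk G w x) :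
    (cons e he W).intW h = (if G.head e = w then 1 else -1) * h e + W.intW h := by
  simp [intW, wI, add_mul, Finset.sum_add_distrib]

lemma intW_eq_sum_of_wI_eq_sum {a : G.V} (W : OWalk G a a) {m : ℕ} {c : Fin m → G.V}
    (T : ∀ i, OWalk G (c i) (c i)) (hW : ∀ e, W.wI e = ∑ i, (T i).wI e) :
    W.intW h = ∑ i, (T i).intW h := by
  simp only [intW, hW, Finset.sum_mul]
  exact Finset.sum_comm

end General

variable (f : G.V → L)

lemma intW_cons_dF {u w x : G.V} (e : G.E)
    (he : (G.tail e = u ∧ G.head e = w) ∨ (G.head e = u ∧ G.tail e = w)) (W : OWalk G w x) :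
    (cons e he W).intW (dF G f) = (f u).step (f w) + W.intW (dF G f) := by
  rw [intW_cons, dF_eq_step]
  congr 1
  rcases he with ⟨rfl, rfl⟩ | ⟨rfl, rfl⟩
  · simp
  · split_ifs with hloop
    · rw [hloop, one_mul]
    · rw [neg_one_mul, L.step_swap (f (G.tail e))]

lemma intW_append_dF {u v x : G.V} (W₁ : OWalk G u v) (W₂ : OWalk G v x) :
    (W₁.append W₂).intW (dF G f) = W₁.intW (dF G f) + W₂.intW (dF G f) := by
  induction W₁ with
  | nil => simp [append]
  | cons e he W ih => simp only [append, intW_cons_dF, ih]; ring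

lemma intW_concat_dF {u v w : G.V} (W : OWalk G u v) (e : G.E)
    (he : (G.tail e = v ∧ G.head e = w) ∨ (G.head e = v ∧ G.tail e = w)) :
    (W.concat e he).intW (dF G f) = W.intW (dF G f) + (f v).step (f w) := by
  induction W with
  | nil => simp [concat, intW_cons_dF]
  | cons e' he' W ih => simp only [concat, intW_cons_dF, ih]; ring

lemma intW_reverse_dF {u v : G.V} (W : OWalk G u v) :
    W.reverse.intW (dF G f) = -W.intW (dF G f) := by
  induction W with
  | nil => simp [reverse]
  | cons e he W ih => rw [reverse, intW_concat_dF, intW_cons_dF, ih, L.step_swap]; ring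

lemma intW_dF_eq_zero_of_const {u v : G.V} (W : OWalk G u v) {c : L}
    (hW : ∀ x ∈ W.verts, f x = c) : W.intW (dF G f) = 0 := by
  induction W with
  | nil => simp
  | @cons u w x e he W ih =>
    have hu : f u = c := hW u (by simp [verts])
    have hw : f w = c := hW w (List.mem_cons_of_mem _ W.start_mem_verts)
    rw [intW_cons_dF, hu, hw, L.step_self, zero_add]
    exact ih fun x hx => hW x (List.mem_cons_of_mem _ hx)

lemma exists_triangle_of_length_eq_three {a : G.V} (T : OWalk G a a) (hT : T.length = 3) :
    ∃ b c : G.V, G.Adj a b ∧ G.Adj b c ∧ G.Adj c a ∧ T.verts = [a, b, c, a] ∧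
      T.intW (dF G f) = (f a).step (f b) + (f b).step (f c) + (f c).step (f a) := by
  have adj {u w : G.V} (e : G.E)
      (he : (G.tail e = u ∧ G.head e = w) ∨ (G.head e = u ∧ G.tail e = w)) : G.Adj u w := by
    rcases he with he | he
    · exact ⟨e, Or.inl he⟩
    · exact ⟨e, Or.inr he.symm⟩
  match T, hT with
  | cons e₁ he₁ (cons e₂ he₂ (cons e₃ he₃ (nil _))), _ =>
    refine ⟨_, _, adj e₁ he₁, adj e₂ he₂, adj e₃ he₃, rfl, ?_⟩
    simp only [intW_cons_dF, intW_nil]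
    ring

variable {f}

lemma abs_intW_dF_le_one_of_length_eq_three (hf : OContinuousOn G f Set.univ) {a : G.V}
    (T : OWalk G a a) (hT : T.length = 3) : |T.intW (dF G f)| ≤ 1 := by
  obtain ⟨b, c, hab, hbc, hca, -, hT⟩ := exists_triangle_of_length_eq_three f T hT
  rw [hT]
  exact L.abs_step_triangle_le_one (hf.continuousPair trivial trivial hab)
    (hf.continuousPair trivial trivial hbc) (hf.continuousPair trivial trivial hca)

lemma intW_dF_eq_zero_of_holomorphicOn {a : G.V} (T : OWalk G a a) (hT : T.length = 3)
    (hf : OHolomorphicOn G f {x | x ∈ T.verts}) : T.intW (dF G f) = 0 := by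
  obtain ⟨b, c, hab, hbc, hca, hverts, hT⟩ := exists_triangle_of_length_eq_three f T hT
  simp only [hverts] at hf
  rw [hT]
  exact L.step_triangle_eq_zero (hf.holomorphicPair (by simp) (by simp) hab)
    (hf.holomorphicPair (by simp) (by simp) hbc) (hf.holomorphicPair (by simp) (by simp) hca)

end OWalk

lemma abs_sum_le_of_abs_le_one_of_eq_zero {m k : ℕ} (x : Fin m → ℤ) (hx : ∀ i, |x i| ≤ 1)
    (hzero : ∀ i : Fin m, k ≤ i.val → x i = 0) : |∑ i, x i| ≤ k := by
  classical
  have hsum : ∑ i, x i = ∑ i with i.val < k, x i :=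
    (Finset.sum_filter_of_ne fun i _ hi => not_le.mp (mt (hzero i) hi)).symm
  calc |∑ i, x i| ≤ ∑ i with i.val < k, |x i| := hsum ▸ Finset.abs_sum_le_sum_abs _ _
    _ ≤ ∑ _i with (_i : Fin m).val < k, 1 := Finset.sum_le_sum fun i _ => hx i
    _ = min m k := by simp [Fin.card_filter_val_lt]
    _ ≤ k := by exact_mod_cast min_le_right m k

lemma OWalk.AlmostContractible.abs_intW_dF_le {G : OGraph} [Fintype G.E] {f : G.V → L}
    (hf : OContinuousOn G f Set.univ) {k : ℕ} {a : G.V} {W : OWalk G a a}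
    (hW : W.AlmostContractible f k) : |W.intW (dF G f)| ≤ k := by
  obtain ⟨m, c, T, hlen, hholo, hsum⟩ := hW
  rw [W.intW_eq_sum_of_wI_eq_sum _ T hsum]
  exact abs_sum_le_of_abs_le_one_of_eq_zero _
    (fun i => OWalk.abs_intW_dF_le_one_of_length_eq_three hf (T i) (hlen i))
    (fun i hi => OWalk.intW_dF_eq_zero_of_holomorphicOn (T i) (hlen i) (hholo i hi))

/-- If `f` is continuous and the walks `W₁`, `W₂` are `(f,k)`-almost homotopic, then
`|∫_{W₁} df − ∫_{W₂} df| ≤ k`; in particular `(f,0)`-almost homotopic (that is,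
`f`-homotopic) walks satisfy `∫_{W₁} df = ∫_{W₂} df`. -/
theorem stmt_7 (G : OGraph) [Fintype G.E] (f : G.V → L)
    (hcont : OContinuousOn G f Set.univ) (k : ℕ)
    {u₁ v₁ u₂ v₂ : G.V} (W₁ : OWalk G u₁ v₁) (W₂ : OWalk G u₂ v₂)
    (hhom : OWalk.AlmostHomotopic f k W₁ W₂) :
    |W₁.intW (dF G f) - W₂.intW (dF G f)| ≤ (k : ℤ) ∧
    (k = 0 → W₁.intW (dF G f) = W₂.intW (dF G f)) := by
  obtain ⟨Q, R, hW, ⟨_, -, hQ⟩, ⟨_, -, hR⟩⟩ := hhom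
  have hbound := hW.abs_intW_dF_le hcont
  simp only [OWalk.intW_append_dF, OWalk.intW_reverse_dF,
    Q.intW_dF_eq_zero_of_const f hQ, R.intW_dF_eq_zero_of_const f hR] at hbound
  have hdiff : |W₁.intW (dF G f) - W₂.intW (dF G f)| ≤ k := by
    rw [abs_sub_comm]; convert hbound using 2; ring
  refine ⟨hdiff, fun hk => ?_⟩
  subst hk
  exact sub_eq_zero.mp (abs_nonpos_iff.mp (by exact_mod_cast hdiff))
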